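/- The solution of x = Σ_{j∈J'} B_j(1+αx) + Σ_{j∈J''} B_j(1) decomposes as x = x' + x'' where x' = Σ_{k≥1} Σ_{i_1,…,i_k∈J'} α^{k−1} B_{i_1}∘⋯∘B_{i_k}(1) and x'' = Σ_{k≥1} Σ_{i_1,…,i_{k−1}∈J', i_k∈J''} α^{k−1} B_{i_1}∘⋯∘B_{i_k}(1), and these satisfy Δ(x') = x'⊗1 + 1⊗x' + αx'⊗x' and Δ(x'') = x''⊗1 + 1⊗x'' + αx''⊗x'. -/

import Mathlib

open TensorProduct

/-- The degree-`n` component of `x' = Σ_{k≥1} Σ_{i_1,…,i_k∈J'} α^{k−1} B_{i_1}∘⋯∘B_{i_k}(1)`. -/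
noncomputable def ladderPrime (K : Type*) [Field K] (H : Type*) [CommRing H] [Algebra K H]
    (α : K) (B : ℕ → H →ₗ[K] H) (J' : Set ℕ) [DecidablePred (· ∈ J')] (n : ℕ) : H :=
  ∑ k ∈ Finset.Icc 1 n,
    ∑ c ∈ (Finset.Nat.antidiagonalTuple k n).filter (fun c => ∀ i, c i ∈ J'),
      α ^ (k - 1) • ((List.ofFn fun i => B (c i)).foldr LinearMap.comp LinearMap.id) 1

/-- The degree-`n` component of
`x'' = Σ_{k≥1} Σ_{i_1,…,i_{k−1}∈J', i_k∈J''} α^{k−1} B_{i_1}∘⋯∘B_{i_k}(1)`. -/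
noncomputable def ladderSecond (K : Type*) [Field K] (H : Type*) [CommRing H] [Algebra K H]
    (α : K) (B : ℕ → H →ₗ[K] H) (J' J'' : Set ℕ)
    [DecidablePred (· ∈ J')] [DecidablePred (· ∈ J'')] (n : ℕ) : H :=
  ∑ k ∈ Finset.Icc 1 n,
    ∑ c ∈ (Finset.Nat.antidiagonalTuple k n).filter
      (fun c => ∀ i : Fin k, if (i : ℕ) + 1 = k then c i ∈ J'' else c i ∈ J'),
      α ^ (k - 1) • ((List.ofFn fun i => B (c i)).foldr LinearMap.comp LinearMap.id) 1

/-!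
For `S ⊆ ℕ*` let `x_S = ladder α B J' S` be the sum of `α^{k-1} B_{i_1}∘⋯∘B_{i_k}(1)` over the
words with `i_1, …, i_{k-1} ∈ J'` and `i_k ∈ S`, graded by `i_1 + ⋯ + i_k`; thus `x' = x_{J'}` and
`x'' = x_{J''}`. Splitting off the first letter shows that `x_S` is the unique solution of
`x_S = Σ_{j∈S} B_j(1) + α Σ_{j∈J'} B_j(x_S)`. This equation is additive in `S`, so
`x = x_{J'∪J''} = x' + x''`. Applying `Δ` to it and using the cocycle property of the `B_j`,
induction on the degree gives `Δ x_S = x_S ⊗ 1 + 1 ⊗ x_S + α x_S ⊗ x'`: the new terms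
`Σ_{j∈J'} (x_S ⊗ B_j(1) + α (id ⊗ B_j)(x_S ⊗ x'))` add up to `x_S ⊗ x'` once `x'` is expanded by
its own equation.
-/

open Finset

section Sums

variable {M : Type*} [AddCommMonoid M]

theorem sum_Icc_one_succ (f : ℕ → M) :
    ∀ n, ∑ k ∈ Icc 1 (n + 1), f k = f 1 + ∑ k ∈ Icc 1 n, f (k + 1)
  | 0 => by simp
  | n + 1 => by
    rw [sum_Icc_succ_top (by omega), sum_Icc_one_succ f n, sum_Icc_succ_top (by omega), add_assoc]

theorem sum_range_filter_eq_sum_antidiagonal_filter (p : ℕ → Prop) [DecidablePred p]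
    (f : ℕ → ℕ → M) (n : ℕ) :
    ∑ j ∈ (range (n + 1)).filter p, f j (n - j) =
      ∑ q ∈ (antidiagonal n).filter (p ·.1), f q.1 q.2 := by
  rw [sum_filter, sum_filter,
    Nat.sum_antidiagonal_eq_sum_range_succ (fun i j => if p i then f i j else 0)]

theorem sum_Ioo_eq_sum_antidiagonal (f : ℕ → ℕ → M) (hf₁ : ∀ b, f 0 b = 0) (hf₂ : ∀ a, f a 0 = 0)
    (n : ℕ) : ∑ k ∈ Ioo 0 n, f (n - k) k = ∑ q ∈ antidiagonal n, f q.1 q.2 := by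
  rw [← Nat.sum_antidiagonal_swap]
  simp only [Prod.fst_swap, Prod.snd_swap]
  rw [Nat.sum_antidiagonal_eq_sum_range_succ (fun a b => f b a)]
  refine sum_subset (fun k hk => by simp at hk ⊢; omega) fun k hk hk' => ?_
  obtain rfl | rfl : k = 0 ∨ k = n := by simp at hk hk'; omega
  · exact hf₂ _
  · simp [hf₁]

theorem sum_antidiagonal_antidiagonal_comm (g : ℕ → ℕ → ℕ → M) (n : ℕ) :
    ∑ p ∈ antidiagonal n, ∑ q ∈ antidiagonal p.2, g p.1 q.1 q.2 =
      ∑ p ∈ antidiagonal n, ∑ q ∈ antidiagonal p.2, g q.1 p.1 q.2 := by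
  simp only [sum_sigma']
  apply sum_nbij' (fun x => ⟨(x.2.1, x.1.1 + x.2.2), (x.1.1, x.2.2)⟩)
    (fun x => ⟨(x.2.1, x.1.1 + x.2.2), (x.1.1, x.2.2)⟩)
  all_goals
    rintro ⟨⟨a, m⟩, ⟨j, k⟩⟩
    simp only [mem_sigma, HasAntidiagonal.mem_antidiagonal, Sigma.mk.injEq, Prod.mk.injEq,
      heq_eq_eq, and_true, true_and, implies_true]
  all_goals omega

end Sums

theorem foldr_comp_ofFn_cons {R M : Type*} [Semiring R] [AddCommMonoid M] [Module R M]
    (B : ℕ → M →ₗ[R] M) {k : ℕ} (j : ℕ) (c : Fin k → ℕ) :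
    (List.ofFn fun i => B ((Fin.cons j c : Fin (k + 1) → ℕ) i)).foldr LinearMap.comp LinearMap.id =
      B j ∘ₗ (List.ofFn fun i => B (c i)).foldr LinearMap.comp LinearMap.id := by
  simp [List.ofFn_succ]

section Ladder

variable {K H : Type*} [CommSemiring K] [Semiring H] [Algebra K H]
  (α : K) (B : ℕ → H →ₗ[K] H) (J' S : Set ℕ) [DecidablePred (· ∈ J')] [DecidablePred (· ∈ S)]

def ladderIndices (k n : ℕ) : Finset (Fin k → ℕ) :=
  (Nat.antidiagonalTuple k n).filter
    fun c => ∀ i : Fin k, if (i : ℕ) + 1 = k then c i ∈ S else c i ∈ J'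

noncomputable def ladderTerm (k n : ℕ) : H :=
  ∑ c ∈ ladderIndices J' S k n,
    α ^ (k - 1) • ((List.ofFn fun i => B (c i)).foldr LinearMap.comp LinearMap.id) 1

noncomputable def ladder (n : ℕ) : H :=
  ∑ k ∈ Icc 1 n, ladderTerm α B J' S k n

variable {J' S}

theorem cons_mem_ladderIndices_succ {k n j : ℕ} (hk : k ≠ 0) {c : Fin k → ℕ} :
    Fin.cons j c ∈ ladderIndices J' S (k + 1) n ↔
      j ∈ J' ∧ j ≤ n ∧ c ∈ ladderIndices J' S k (n - j) := by
  simp only [ladderIndices, mem_filter, Nat.mem_antidiagonalTuple, Fin.sum_cons,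
    Fin.forall_fin_succ, Fin.cons_zero, Fin.cons_succ, Fin.val_zero, Fin.val_succ,
    Nat.add_right_cancel_iff, if_neg hk.symm]
  constructor
  · rintro ⟨hsum, hj, hc⟩
    exact ⟨hj, by omega, by omega, hc⟩
  · rintro ⟨hj, hjn, hsum, hc⟩
    exact ⟨by omega, hj, hc⟩

theorem ladderIndices_eq_empty (hJ' : ∀ j ∈ J', 0 < j) (hS : ∀ j ∈ S, 0 < j) {k n : ℕ}
    (h : n < k) : ladderIndices J' S k n = ∅ := by
  refine filter_eq_empty_iff.mpr fun c hc hcJ => h.not_ge ?_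
  rw [← Nat.mem_antidiagonalTuple.mp hc]
  calc k = ∑ _i : Fin k, 1 := by simp
    _ ≤ ∑ i, c i := sum_le_sum fun i _ => by
      have := hcJ i
      split_ifs at this
      exacts [hS _ this, hJ' _ this]

theorem ladderTerm_one (n : ℕ) : ladderTerm α B J' S 1 n = if n ∈ S then B n 1 else 0 := by
  simp only [ladderTerm, ladderIndices, Nat.antidiagonalTuple_one, filter_singleton]
  split_ifs with h₁ h₂ h₂
  · simp
  · exact absurd (by simpa using h₁ 0) h₂
  · exact absurd (fun i => by simpa [Fin.fin_one_eq_zero i] using h₂) h₁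
  · simp

theorem ladderTerm_succ {k : ℕ} (hk : k ≠ 0) (n : ℕ) :
    ladderTerm α B J' S (k + 1) n =
      α • ∑ q ∈ (antidiagonal n).filter (·.1 ∈ J'), B q.1 (ladderTerm α B J' S k q.2) := by
  simp only [ladderTerm, map_sum, map_smul, smul_sum, sum_sigma', smul_smul]
  refine sum_nbij' (fun c => ⟨(c 0, n - c 0), Fin.tail c⟩) (fun x => Fin.cons x.1.1 x.2)
    (fun c hc => ?_) (fun x hx => ?_) (fun c _ => Fin.cons_self_tail c) (fun x hx => ?_)
    (fun c _ => ?_)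
  · rw [← Fin.cons_self_tail c, cons_mem_ladderIndices_succ hk] at hc
    simpa [hc.1, hc.2.1] using hc.2.2
  · obtain ⟨⟨j, r⟩, c⟩ := x
    simp only [mem_filter, mem_sigma, HasAntidiagonal.mem_antidiagonal] at hx
    dsimp only
    rw [cons_mem_ladderIndices_succ hk, ← hx.1.1, Nat.add_sub_cancel_left]
    exact ⟨hx.1.2, by omega, hx.2⟩
  · obtain ⟨⟨j, r⟩, c⟩ := x
    simp only [mem_filter, mem_sigma, HasAntidiagonal.mem_antidiagonal] at hx
    simp [← hx.1.1]
  · conv_lhs => rw [← Fin.cons_self_tail c]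
    rw [foldr_comp_ofFn_cons, ← pow_succ', Nat.sub_add_cancel (Nat.one_le_iff_ne_zero.mpr hk),
      Nat.add_sub_cancel]
    rfl

theorem ladderTerm_eq_zero_of_lt (hJ' : ∀ j ∈ J', 0 < j) (hS : ∀ j ∈ S, 0 < j) {k n : ℕ}
    (h : n < k) : ladderTerm α B J' S k n = 0 := by
  rw [ladderTerm, ladderIndices_eq_empty hJ' hS h, sum_empty]

@[simp]
theorem ladder_zero : ladder α B J' S 0 = 0 := by simp [ladder]

theorem ladder_eq_sum_Icc (hJ' : ∀ j ∈ J', 0 < j) (hS : ∀ j ∈ S, 0 < j) {n N : ℕ} (h : n ≤ N) :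
    ladder α B J' S n = ∑ k ∈ Icc 1 N, ladderTerm α B J' S k n :=
  sum_subset (Icc_subset_Icc_right h) fun k hk hkn => by
    simp only [mem_Icc] at hk hkn
    exact ladderTerm_eq_zero_of_lt α B hJ' hS (by omega)

theorem ladder_eq_ite_add_smul_sum (hJ' : ∀ j ∈ J', 0 < j) (hS : ∀ j ∈ S, 0 < j) (n : ℕ) :
    ladder α B J' S n = (if n ∈ S then B n 1 else 0) +
      α • ∑ q ∈ (antidiagonal n).filter (·.1 ∈ J'), B q.1 (ladder α B J' S q.2) := by
  have hsnd : ∀ q ∈ (antidiagonal n).filter (·.1 ∈ J'), q.2 ≤ n := fun q hq => by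
    rw [mem_filter, HasAntidiagonal.mem_antidiagonal] at hq
    omega
  rw [ladder_eq_sum_Icc α B hJ' hS n.le_succ, sum_Icc_one_succ, ladderTerm_one,
    sum_congr rfl fun k hk => ladderTerm_succ α B (by simp at hk; omega) n, ← smul_sum, sum_comm]
  congr 2
  refine sum_congr rfl fun q hq => ?_
  rw [ladder_eq_sum_Icc α B hJ' hS (hsnd q hq), map_sum]

theorem eq_ladder_of_eq_ite_add_smul_sum (hJ' : ∀ j ∈ J', 0 < j) (hS : ∀ j ∈ S, 0 < j)
    {x : ℕ → H} (hx₀ : x 0 = 0)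
    (hx : ∀ n, 1 ≤ n → x n = (if n ∈ S then B n 1 else 0) +
      α • ∑ q ∈ (antidiagonal n).filter (·.1 ∈ J'), B q.1 (x q.2)) :
    x = ladder α B J' S := by
  funext n
  induction n using Nat.strong_induction_on with
  | _ n ih =>
  obtain rfl | hn := Nat.eq_zero_or_pos n
  · rw [hx₀, ladder_zero]
  rw [hx n hn, ladder_eq_ite_add_smul_sum α B hJ' hS n]
  congr 2
  refine sum_congr rfl fun q hq => ?_
  obtain ⟨hq, hqJ⟩ := mem_filter.mp hq
  rw [ih q.2 (by have := hJ' _ hqJ; rw [HasAntidiagonal.mem_antidiagonal] at hq; omega)]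

theorem ladder_union {S₁ S₂ : Set ℕ} [DecidablePred (· ∈ S₁)] [DecidablePred (· ∈ S₂)]
    (hdisj : Disjoint S₁ S₂) (hJ' : ∀ j ∈ J', 0 < j) (hS : ∀ j ∈ S₁ ∪ S₂, 0 < j) :
    ladder α B J' (S₁ ∪ S₂) = ladder α B J' S₁ + ladder α B J' S₂ := by
  have hS₁ : ∀ j ∈ S₁, 0 < j := fun j hj => hS j (.inl hj)
  have hS₂ : ∀ j ∈ S₂, 0 < j := fun j hj => hS j (.inr hj)
  refine (eq_ladder_of_eq_ite_add_smul_sum α B hJ' hS (by simp) fun n _ => ?_).symm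
  have hite : (if n ∈ S₁ ∪ S₂ then B n 1 else 0) =
      (if n ∈ S₁ then B n 1 else 0) + (if n ∈ S₂ then B n 1 else 0) := by
    by_cases h₁ : n ∈ S₁ <;> by_cases h₂ : n ∈ S₂
    · exact absurd hdisj (Set.not_disjoint_iff.mpr ⟨n, h₁, h₂⟩)
    all_goals simp [h₁, h₂]
  simp only [Pi.add_apply, map_add, sum_add_distrib, smul_add, hite,
    ladder_eq_ite_add_smul_sum α B hJ' hS₁ n, ladder_eq_ite_add_smul_sum α B hJ' hS₂ n]
  abel

theorem sum_antidiagonal_tmul_ladder (hJ' : ∀ j ∈ J', 0 < j) (u : ℕ → H) (n : ℕ) :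
    ∑ q ∈ antidiagonal n, u q.1 ⊗ₜ[K] ladder α B J' J' q.2 =
      ∑ q ∈ (antidiagonal n).filter (·.1 ∈ J'), u q.2 ⊗ₜ[K] B q.1 1 +
        α • ∑ q ∈ (antidiagonal n).filter (·.1 ∈ J'),
          ∑ p ∈ antidiagonal q.2, u p.1 ⊗ₜ[K] B q.1 (ladder α B J' J' p.2) := by
  calc ∑ q ∈ antidiagonal n, u q.1 ⊗ₜ[K] ladder α B J' J' q.2
      = ∑ q ∈ antidiagonal n, (if q.2 ∈ J' then u q.1 ⊗ₜ[K] B q.2 1 else 0) +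
          α • ∑ q ∈ antidiagonal n, ∑ p ∈ antidiagonal q.2,
            if p.1 ∈ J' then u q.1 ⊗ₜ[K] B p.1 (ladder α B J' J' p.2) else 0 := by
        rw [smul_sum, ← sum_add_distrib]
        refine sum_congr rfl fun q _ => ?_
        rw [ladder_eq_ite_add_smul_sum α B hJ' hJ', tmul_add, tmul_smul, tmul_sum, sum_filter]
        split_ifs <;> simp
    _ = ∑ q ∈ antidiagonal n, (if q.1 ∈ J' then u q.2 ⊗ₜ[K] B q.1 1 else 0) +
          α • ∑ q ∈ antidiagonal n, ∑ p ∈ antidiagonal q.2,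
            if q.1 ∈ J' then u p.1 ⊗ₜ[K] B q.1 (ladder α B J' J' p.2) else 0 := by
        rw [← Nat.sum_antidiagonal_swap, sum_antidiagonal_antidiagonal_comm
          (fun a j k => if j ∈ J' then u a ⊗ₜ[K] B j (ladder α B J' J' k) else 0)]
        rfl
    _ = _ := by
        simp only [sum_filter]
        congr 2
        refine sum_congr rfl fun q _ => ?_
        split_ifs <;> simp

end Ladder

section Comul

variable {K H : Type*} [CommSemiring K] [Semiring H] [Bialgebra K H]

def IsOneCocycle (L : H →ₗ[K] H) : Prop :=
  ∀ y, Coalgebra.comul (R := K) (L y) =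
    L y ⊗ₜ[K] 1 + map LinearMap.id L (Coalgebra.comul (R := K) y)

theorem IsOneCocycle.comul_apply_one {L : H →ₗ[K] H} (hL : IsOneCocycle L) :
    Coalgebra.comul (R := K) (L 1) = L 1 ⊗ₜ[K] 1 + 1 ⊗ₜ[K] L 1 := by
  rw [hL, Bialgebra.comul_one, Algebra.TensorProduct.one_def, map_tmul, LinearMap.id_apply]

variable (α : K) (B : ℕ → H →ₗ[K] H) {J' S : Set ℕ}
  [DecidablePred (· ∈ J')] [DecidablePred (· ∈ S)]

theorem comul_ladder (hJ' : ∀ j ∈ J', 0 < j) (hS : ∀ j ∈ S, 0 < j)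
    (hBJ' : ∀ j ∈ J', IsOneCocycle (B j)) (hBS : ∀ j ∈ S, IsOneCocycle (B j)) (n : ℕ) :
    Coalgebra.comul (R := K) (ladder α B J' S n) =
      ladder α B J' S n ⊗ₜ[K] 1 + 1 ⊗ₜ[K] ladder α B J' S n +
        α • ∑ q ∈ antidiagonal n, ladder α B J' S q.1 ⊗ₜ[K] ladder α B J' J' q.2 := by
  induction n using Nat.strong_induction_on with
  | _ n ih =>
  have hseed : Coalgebra.comul (R := K) (if n ∈ S then B n 1 else 0) =
      (if n ∈ S then B n 1 else 0) ⊗ₜ[K] 1 + 1 ⊗ₜ[K] (if n ∈ S then B n 1 else 0) := by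
    split_ifs with h
    exacts [(hBS n h).comul_apply_one, by simp]
  have hstep : ∀ q ∈ (antidiagonal n).filter (·.1 ∈ J'),
      Coalgebra.comul (R := K) (B q.1 (ladder α B J' S q.2)) =
        B q.1 (ladder α B J' S q.2) ⊗ₜ[K] 1 + 1 ⊗ₜ[K] B q.1 (ladder α B J' S q.2) +
          (ladder α B J' S q.2 ⊗ₜ[K] B q.1 1 + α • ∑ p ∈ antidiagonal q.2,
            ladder α B J' S p.1 ⊗ₜ[K] B q.1 (ladder α B J' J' p.2)) := by
    intro q hq
    rw [mem_filter, HasAntidiagonal.mem_antidiagonal] at hq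
    rw [hBJ' _ hq.2, ih q.2 (by have := hJ' _ hq.2; omega)]
    simp only [map_add, map_smul, map_sum, map_tmul, LinearMap.id_apply]
    abel
  rw [sum_antidiagonal_tmul_ladder α B hJ', ladder_eq_ite_add_smul_sum α B hJ' hS n, map_add,
    map_smul, map_sum, hseed, sum_congr rfl hstep]
  simp only [add_tmul, tmul_add, ← smul_tmul', tmul_smul, sum_tmul, tmul_sum, sum_add_distrib,
    smul_add, smul_sum]
  abel

end Comul

theorem ladderPrime_eq_ladder {K H : Type*} [Field K] [CommRing H] [Algebra K H] (α : K)
    (B : ℕ → H →ₗ[K] H) (J' : Set ℕ) [DecidablePred (· ∈ J')] :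
    ladderPrime K H α B J' = ladder α B J' J' := by
  funext n
  refine sum_congr rfl fun k _ => sum_congr (filter_congr fun c _ => ?_) fun _ _ => rfl
  simp only [ite_self]

theorem DSE_solution_decomposition_general (K : Type*) [Field K]
    (H : Type*) [CommRing H] [HopfAlgebra K H] (α : K)
    (J' J'' : Set ℕ) [DecidablePred (· ∈ J')] [DecidablePred (· ∈ J'')]
    (hdisj : Disjoint J' J'')
    (hpos : ∀ n ∈ J' ∪ J'', 0 < n)
    (B : ℕ → H →ₗ[K] H)
    (hB : ∀ j ∈ J' ∪ J'', ∀ y : H, Coalgebra.comul (R := K) (B j y) =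
      B j y ⊗ₜ[K] 1 + TensorProduct.map LinearMap.id (B j) (Coalgebra.comul (R := K) y))
    (x : ℕ → H) (hx0 : x 0 = 0)
    (hx : ∀ n, 1 ≤ n → x n = (if n ∈ J' ∪ J'' then B n 1 else 0) +
      α • ∑ j ∈ (Finset.range (n + 1)).filter (· ∈ J'), B j (x (n - j))) :
    (∀ n, x n = ladderPrime K H α B J' n + ladderSecond K H α B J' J'' n) ∧
    (∀ n, Coalgebra.comul (R := K) (ladderPrime K H α B J' n) =
      ladderPrime K H α B J' n ⊗ₜ[K] 1 + 1 ⊗ₜ[K] ladderPrime K H α B J' n +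
        α • ∑ k ∈ Finset.Ioo 0 n,
          ladderPrime K H α B J' (n - k) ⊗ₜ[K] ladderPrime K H α B J' k) ∧
    (∀ n, Coalgebra.comul (R := K) (ladderSecond K H α B J' J'' n) =
      ladderSecond K H α B J' J'' n ⊗ₜ[K] 1 + 1 ⊗ₜ[K] ladderSecond K H α B J' J'' n +
        α • ∑ k ∈ Finset.Ioo 0 n,
          ladderSecond K H α B J' J'' (n - k) ⊗ₜ[K] ladderPrime K H α B J' k) := by
  have hJ' : ∀ j ∈ J', 0 < j := fun j hj => hpos j (.inl hj)
  have hJ'' : ∀ j ∈ J'', 0 < j := fun j hj => hpos j (.inr hj)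
  have hBJ' : ∀ j ∈ J', IsOneCocycle (B j) := fun j hj => hB j (.inl hj)
  have hBJ'' : ∀ j ∈ J'', IsOneCocycle (B j) := fun j hj => hB j (.inr hj)
  have hx_eq : x = ladder α B J' (J' ∪ J'') :=
    eq_ladder_of_eq_ite_add_smul_sum α B hJ' hpos hx0 fun n hn => by
      rw [hx n hn, sum_range_filter_eq_sum_antidiagonal_filter (· ∈ J') fun j m => B j (x m)]
  rw [ladderPrime_eq_ladder, show ladderSecond K H α B J' J'' = ladder α B J' J'' from rfl,
    hx_eq, ladder_union α B hdisj hJ' hpos]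
  refine ⟨fun n => rfl, fun n => ?_, fun n => ?_⟩
  all_goals
    rw [comul_ladder α B hJ' ‹_› hBJ' ‹_›, sum_Ioo_eq_sum_antidiagonal
      (fun a b => ladder α B J' _ a ⊗ₜ[K] ladder α B J' J' b) (by simp) (by simp)]

/-- The solution of `x = Σ_{j∈J'} B_j(1+αx) + Σ_{j∈J''} B_j(1)` (given componentwise)
decomposes as `x = x' + x''` where
`x' = Σ_{k≥1} Σ_{i_1,…,i_k∈J'} α^{k−1} B_{i_1}∘⋯∘B_{i_k}(1)` and
`x'' = Σ_{k≥1} Σ_{i_1,…,i_{k−1}∈J', i_k∈J''} α^{k−1} B_{i_1}∘⋯∘B_{i_k}(1)`, and these satisfy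
`Δ(x') = x'⊗1 + 1⊗x' + αx'⊗x'` and `Δ(x'') = x''⊗1 + 1⊗x'' + αx''⊗x'` (componentwise). -/
theorem DSE_solution_decomposition (K : Type*) [Field K] [CharZero K]
    (H : Type*) [CommRing H] [HopfAlgebra K H] (α : K)
    (J' J'' : Set ℕ) [DecidablePred (· ∈ J')] [DecidablePred (· ∈ J'')]
    (hdisj : Disjoint J' J'')
    (hpos : ∀ n ∈ J' ∪ J'', 0 < n)
    (B : ℕ → H →ₗ[K] H)
    (hB : ∀ j ∈ J' ∪ J'', ∀ y : H, Coalgebra.comul (R := K) (B j y) =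
      B j y ⊗ₜ[K] 1 + TensorProduct.map LinearMap.id (B j) (Coalgebra.comul (R := K) y))
    (x : ℕ → H) (hx0 : x 0 = 0)
    (hx : ∀ n, 1 ≤ n → x n = (if n ∈ J' ∪ J'' then B n 1 else 0) +
      α • ∑ j ∈ (Finset.range (n + 1)).filter (· ∈ J'), B j (x (n - j))) :
    (∀ n, x n = ladderPrime K H α B J' n + ladderSecond K H α B J' J'' n) ∧
    (∀ n, Coalgebra.comul (R := K) (ladderPrime K H α B J' n) =
      ladderPrime K H α B J' n ⊗ₜ[K] 1 + 1 ⊗ₜ[K] ladderPrime K H α B J' n +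
        α • ∑ k ∈ Finset.Ioo 0 n,
          ladderPrime K H α B J' (n - k) ⊗ₜ[K] ladderPrime K H α B J' k) ∧
    (∀ n, Coalgebra.comul (R := K) (ladderSecond K H α B J' J'' n) =
      ladderSecond K H α B J' J'' n ⊗ₜ[K] 1 + 1 ⊗ₜ[K] ladderSecond K H α B J' J'' n +
        α • ∑ k ∈ Finset.Ioo 0 n,
          ladderSecond K H α B J' J'' (n - k) ⊗ₜ[K] ladderPrime K H α B J' k) :=
  DSE_solution_decomposition_general K H α J' J'' hdisj hpos B hB x hx0 hx
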